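/- Fix σ ≥ 1 and f ∈ [-1/2, 1/2]. The Markov kernel on f + ℤ with steps in {-1, +1, +2} defined as follows preserves the discrete Gaussian measure with mass at n+f proportional to exp(-(n+f)²/(2σ²)): for n ≥ 2, state n+f moves to n+1+f with probability p_σ(n+f), else to n-1+f; for n ≥ 1, state -n+f moves to -n-1+f with probability p_σ(n-f), else to -n+1+f; state f moves to 1+f with probability p_σ(f), to -1+f with probability p_σ(-f), and to 2+f with probability r_σ(f); state 1+f moves to 2+f with probability p_σ(1+f) - r_σ(f)·exp((2f+1)/(2σ²)), else to f. -/

import Mathlib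

/-! With `ρ(x) = exp(-x²/(2σ²))`, the product `ρ(x) p_σ(x)` is the alternating tail
`T(x) = ∑_{j ≥ 1} (-1)^(j-1) ρ(x + j)`, which telescopes: `T(x) + T(x + 1) = ρ(x + 1)`. This gives
the balance `ρ(x-1) p_σ(x-1) + ρ(x+1) (1 - p_σ(x+1)) = ρ(x)` at every state entered only by `±1`
steps. Near the origin one also needs `ρ(f) r_σ(f) = T(f - 1) - T(-f)`, obtained by splitting the
sum over `ℤ` into its nonnegative and negative parts, and `exp((2f+1)/(2σ²)) = ρ(f) / ρ(1 + f)`. -/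

open Real

noncomputable def pw (σ x : ℝ) : ℝ :=
  ∑' j : ℕ, (-1 : ℝ) ^ j * Real.exp (-(((j : ℝ) + 1) ^ 2 + 2 * x * ((j : ℝ) + 1)) / (2 * σ ^ 2))

noncomputable def rw' (σ f : ℝ) : ℝ :=
  ∑' j : ℤ, (-1 : ℝ) ^ j * Real.exp (-(((j : ℝ) ^ 2 + 2 * f * (j : ℝ)) / (2 * σ ^ 2)))

/-- Transition kernel of the `±1, 2` walk on `f + ℤ` (states indexed by `ℤ`). -/
noncomputable def ramanujanKernel (σ f : ℝ) (n m : ℤ) : ℝ :=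
  if 2 ≤ n then
    (if m = n + 1 then pw σ ((n : ℝ) + f)
     else if m = n - 1 then 1 - pw σ ((n : ℝ) + f) else 0)
  else if n ≤ -1 then
    (if m = n - 1 then pw σ (-(n : ℝ) - f)
     else if m = n + 1 then 1 - pw σ (-(n : ℝ) - f) else 0)
  else if n = 0 then
    (if m = 1 then pw σ f
     else if m = -1 then pw σ (-f)
     else if m = 2 then rw' σ f else 0)
  else
    (if m = 2 then pw σ (1 + f) - rw' σ f * Real.exp ((2 * f + 1) / (2 * σ ^ 2))
     else if m = 0 then 1 - (pw σ (1 + f) - rw' σ f * Real.exp ((2 * f + 1) / (2 * σ ^ 2)))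
     else 0)

noncomputable def gaussWeight (σ x : ℝ) : ℝ := Real.exp (-x ^ 2 / (2 * σ ^ 2))

noncomputable def gaussAltTail (σ x : ℝ) : ℝ :=
  ∑' j : ℕ, (-1 : ℝ) ^ j * gaussWeight σ (x + 1 + j)

lemma gaussWeight_neg (σ x : ℝ) : gaussWeight σ (-x) = gaussWeight σ x := by
  rw [gaussWeight, gaussWeight, neg_sq]

lemma gaussWeight_mul_exp (σ x y : ℝ) :
    gaussWeight σ x * Real.exp (-(y ^ 2 + 2 * x * y) / (2 * σ ^ 2)) = gaussWeight σ (x + y) := by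
  rw [gaussWeight, gaussWeight, ← exp_add]
  ring_nf

lemma gaussWeight_one_add_mul_exp (σ f : ℝ) :
    gaussWeight σ (1 + f) * Real.exp ((2 * f + 1) / (2 * σ ^ 2)) = gaussWeight σ f := by
  convert gaussWeight_mul_exp σ (1 + f) (-1) using 3 <;> ring

lemma gaussWeight_mul_pw (σ x : ℝ) : gaussWeight σ x * pw σ x = gaussAltTail σ x := by
  rw [pw, gaussAltTail, ← tsum_mul_left]
  congr 1 with j
  rw [mul_left_comm, gaussWeight_mul_exp, add_comm (j : ℝ), ← add_assoc]

section

variable {σ : ℝ}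

lemma summable_gaussWeight_add_nat (hσ : 0 < σ) (x : ℝ) :
    Summable fun j : ℕ => gaussWeight σ (x + j) := by
  have hdecay : Summable fun j : ℕ => Real.exp ((1 - 2 * x) / (2 * σ ^ 2)) *
      Real.exp (j * (-1 / σ ^ 2)) :=
    (summable_exp_nat_mul_iff.mpr
      (div_neg_of_neg_of_pos neg_one_lt_zero (by positivity))).mul_left _
  refine hdecay.of_nonneg_of_le (fun _ => (exp_pos _).le) fun j => ?_
  rw [← exp_add, gaussWeight, exp_le_exp,
    show (1 - 2 * x) / (2 * σ ^ 2) + j * (-1 / σ ^ 2) = (1 - 2 * (x + j)) / (2 * σ ^ 2) by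
      field_simp; ring]
  gcongr
  nlinarith [sq_nonneg (x + j - 1)]

lemma summable_alternating_gaussWeight (hσ : 0 < σ) (x : ℝ) :
    Summable fun j : ℕ => (-1 : ℝ) ^ j * gaussWeight σ (x + j) :=
  (summable_gaussWeight_add_nat hσ x).of_norm_bounded fun j => by
    simp [abs_of_pos (exp_pos _), gaussWeight]

lemma gaussAltTail_add_gaussAltTail_add_one (hσ : 0 < σ) (x : ℝ) :
    gaussAltTail σ x + gaussAltTail σ (x + 1) = gaussWeight σ (x + 1) := by
  have hsum := summable_alternating_gaussWeight hσ (x + 1)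
  have htail : ∀ j : ℕ, (-1 : ℝ) ^ (j + 1) * gaussWeight σ (x + 1 + ↑(j + 1)) =
      -((-1) ^ j * gaussWeight σ (x + 1 + 1 + j)) := fun j => by
    push_cast; ring_nf
  rw [gaussAltTail, hsum.tsum_eq_zero_add, gaussAltTail, tsum_congr htail, tsum_neg]
  simp

lemma gaussWeight_balance (hσ : 0 < σ) (x : ℝ) :
    gaussWeight σ (x - 1) * pw σ (x - 1) + gaussWeight σ (x + 1) * (1 - pw σ (x + 1)) =
      gaussWeight σ x := by
  have h₁ := gaussAltTail_add_gaussAltTail_add_one hσ (x - 1)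
  have h₂ := gaussAltTail_add_gaussAltTail_add_one hσ x
  rw [sub_add_cancel] at h₁
  rw [mul_one_sub, gaussWeight_mul_pw, gaussWeight_mul_pw]
  linarith

lemma gaussWeight_mul_rw' (hσ : 0 < σ) (f : ℝ) :
    gaussWeight σ f * rw' σ f = gaussAltTail σ (f - 1) - gaussAltTail σ (-f) := by
  have hnat : HasSum (fun n : ℕ => (-1 : ℝ) ^ (n : ℤ) * gaussWeight σ (f + (n : ℤ)))
      (gaussAltTail σ (f - 1)) := by
    simp only [zpow_natCast, Int.cast_natCast, gaussAltTail, sub_add_cancel]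
    exact (summable_alternating_gaussWeight hσ f).hasSum
  have hneg : HasSum
      (fun n : ℕ => (-1 : ℝ) ^ (-(n + 1 : ℤ)) * gaussWeight σ (f + (-(n + 1 : ℤ) : ℤ)))
      (-gaussAltTail σ (-f)) := by
    have hterm : ∀ n : ℕ,
        (-1 : ℝ) ^ (-(n + 1 : ℤ)) * gaussWeight σ (f + (-(n + 1 : ℤ) : ℤ)) =
          -((-1) ^ n * gaussWeight σ (-f + 1 + n)) := fun n => by
      rw [zpow_neg, ← gaussWeight_neg]
      push_cast
      rw [zpow_add_one₀ (by norm_num), zpow_natCast, mul_inv, ← inv_pow, inv_neg_one]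
      ring_nf
    simp only [hterm, gaussAltTail]
    exact (summable_alternating_gaussWeight hσ (-f + 1)).hasSum.neg
  have hint : HasSum (fun j : ℤ => (-1 : ℝ) ^ j * gaussWeight σ (f + j))
      (gaussAltTail σ (f - 1) + -gaussAltTail σ (-f)) :=
    HasSum.of_nat_of_neg_add_one hnat hneg
  rw [rw', ← tsum_mul_left, sub_eq_add_neg, ← hint.tsum_eq]
  congr 1 with j
  rw [mul_left_comm, ← neg_div, gaussWeight_mul_exp]

end

noncomputable def gaussInflow (σ f : ℝ) (m : ℤ) : ℝ :=
  ∑' n : ℤ, gaussWeight σ (n + f) * ramanujanKernel σ f n m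

section Kernel

variable {σ f : ℝ}

lemma ramanujanKernel_eq_zero {n m : ℤ} (h₁ : n ≠ m - 1) (h₂ : n ≠ m + 1)
    (h₃ : n ≠ 0 ∨ m ≠ 2) :
    ramanujanKernel σ f n m = 0 := by
  unfold ramanujanKernel
  split_ifs <;> first | rfl | omega

lemma ramanujanKernel_add_one_of_two_le {n : ℤ} (hn : 2 ≤ n) :
    ramanujanKernel σ f n (n + 1) = pw σ (n + f) := by
  simp [ramanujanKernel, hn]

lemma ramanujanKernel_sub_one_of_two_le {n : ℤ} (hn : 2 ≤ n) :
    ramanujanKernel σ f n (n - 1) = 1 - pw σ (n + f) := by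
  simp [ramanujanKernel, hn, show n - 1 ≠ n + 1 by omega]

lemma ramanujanKernel_sub_one_of_le_neg_one {n : ℤ} (hn : n ≤ -1) :
    ramanujanKernel σ f n (n - 1) = pw σ (-n - f) := by
  simp [ramanujanKernel, hn, show ¬ 2 ≤ n by omega]

lemma ramanujanKernel_add_one_of_le_neg_one {n : ℤ} (hn : n ≤ -1) :
    ramanujanKernel σ f n (n + 1) = 1 - pw σ (-n - f) := by
  simp [ramanujanKernel, hn, show ¬ 2 ≤ n by omega, show n + 1 ≠ n - 1 by omega]

lemma gaussInflow_of_ne_two {m : ℤ} (hm : m ≠ 2) :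
    gaussInflow σ f m = gaussWeight σ (↑(m - 1) + f) * ramanujanKernel σ f (m - 1) m +
      gaussWeight σ (↑(m + 1) + f) * ramanujanKernel σ f (m + 1) m := by
  rw [gaussInflow, tsum_eq_sum (s := {m - 1, m + 1}), Finset.sum_pair (by omega)]
  intro n hn
  simp only [Finset.mem_insert, Finset.mem_singleton, not_or] at hn
  rw [ramanujanKernel_eq_zero hn.1 hn.2 (Or.inr hm), mul_zero]

lemma gaussInflow_of_three_le (hσ : 0 < σ) {m : ℤ} (hm : 3 ≤ m) :
    gaussInflow σ f m = gaussWeight σ (m + f) := by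
  have hup := ramanujanKernel_add_one_of_two_le (σ := σ) (f := f) (n := m - 1) (by omega)
  have hdown := ramanujanKernel_sub_one_of_two_le (σ := σ) (f := f) (n := m + 1) (by omega)
  rw [sub_add_cancel] at hup
  rw [add_sub_cancel_right] at hdown
  rw [gaussInflow_of_ne_two (by omega), hup, hdown,
    show ((m - 1 : ℤ) : ℝ) + f = m + f - 1 by push_cast; ring,
    show ((m + 1 : ℤ) : ℝ) + f = m + f + 1 by push_cast; ring]
  exact gaussWeight_balance hσ _

lemma gaussInflow_of_le_neg_two (hσ : 0 < σ) {m : ℤ} (hm : m ≤ -2) :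
    gaussInflow σ f m = gaussWeight σ (m + f) := by
  have hup := ramanujanKernel_add_one_of_le_neg_one (σ := σ) (f := f) (n := m - 1) (by omega)
  have hdown := ramanujanKernel_sub_one_of_le_neg_one (σ := σ) (f := f) (n := m + 1) (by omega)
  rw [sub_add_cancel] at hup
  rw [add_sub_cancel_right] at hdown
  rw [gaussInflow_of_ne_two (by omega), hup, hdown, add_comm,
    ← gaussWeight_neg σ (↑(m + 1) + f), ← gaussWeight_neg σ (↑(m - 1) + f),
    ← gaussWeight_neg σ (m + f),
    show -(((m + 1 : ℤ) : ℝ) + f) = -m - f - 1 by push_cast; ring,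
    show -((m + 1 : ℤ) : ℝ) - f = -m - f - 1 by push_cast; ring,
    show -(((m - 1 : ℤ) : ℝ) + f) = -m - f + 1 by push_cast; ring,
    show -((m - 1 : ℤ) : ℝ) - f = -m - f + 1 by push_cast; ring, neg_add']
  exact gaussWeight_balance hσ _

lemma gaussInflow_two (hσ : 0 < σ) : gaussInflow σ f 2 = gaussWeight σ (2 + f) := by
  have hb := gaussWeight_balance hσ (2 + f)
  rw [show (2 : ℝ) + f - 1 = 1 + f by ring, show (2 : ℝ) + f + 1 = 3 + f by ring] at hb
  rw [gaussInflow, tsum_eq_sum (s := {0, 1, 3}), Finset.sum_insert (by decide),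
    Finset.sum_pair (by decide)]
  · norm_num [ramanujanKernel]
    linear_combination hb - rw' σ f * gaussWeight_one_add_mul_exp σ f
  · intro n hn
    simp only [Finset.mem_insert, Finset.mem_singleton, not_or] at hn
    exact mul_eq_zero_of_right _ (ramanujanKernel_eq_zero (by omega) (by omega) (by omega))

lemma gaussInflow_one (hσ : 0 < σ) : gaussInflow σ f 1 = gaussWeight σ (1 + f) := by
  have hb := gaussWeight_balance hσ (1 + f)
  rw [add_sub_cancel_left, show 1 + f + 1 = 2 + f by ring] at hb
  rw [gaussInflow_of_ne_two (by decide)]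
  norm_num [ramanujanKernel]
  exact hb

lemma gaussInflow_zero (hσ : 0 < σ) : gaussInflow σ f 0 = gaussWeight σ f := by
  have h₁ := gaussAltTail_add_gaussAltTail_add_one hσ (-f)
  have h₂ := gaussAltTail_add_gaussAltTail_add_one hσ (f - 1)
  have h₃ := gaussAltTail_add_gaussAltTail_add_one hσ f
  rw [neg_add_eq_sub] at h₁
  rw [sub_add_cancel] at h₂
  rw [add_comm f 1] at h₃
  rw [gaussInflow_of_ne_two (by decide)]
  norm_num [ramanujanKernel]
  rw [← gaussWeight_neg, neg_add, neg_neg, ← sub_eq_add_neg]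
  linear_combination -gaussWeight_mul_pw σ (1 - f) - gaussWeight_mul_pw σ (1 + f) +
    rw' σ f * gaussWeight_one_add_mul_exp σ f + gaussWeight_mul_rw' hσ f - h₁ - h₃ + h₂

lemma gaussInflow_neg_one (hσ : 0 < σ) : gaussInflow σ f (-1) = gaussWeight σ (-1 + f) := by
  have hb := gaussWeight_balance hσ (1 - f)
  rw [sub_sub_cancel_left, show 1 - f + 1 = 2 - f by ring] at hb
  rw [gaussInflow_of_ne_two (by decide)]
  norm_num [ramanujanKernel]
  rw [show (-2 : ℝ) + f = -(2 - f) by ring, show (-1 : ℝ) + f = -(1 - f) by ring,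
    gaussWeight_neg, gaussWeight_neg, ← gaussWeight_neg σ f]
  linear_combination hb

end Kernel

theorem stmt14_general (σ f : ℝ) (hσ : 1 ≤ σ) :
    ∀ m : ℤ,
      ∑' n : ℤ, Real.exp (-((n : ℝ) + f) ^ 2 / (2 * σ ^ 2)) * ramanujanKernel σ f n m =
        Real.exp (-((m : ℝ) + f) ^ 2 / (2 * σ ^ 2)) := by
  intro m
  have hσ₀ : 0 < σ := one_pos.trans_le hσ
  change gaussInflow σ f m = gaussWeight σ (m + f)
  obtain hm | rfl | rfl | rfl | rfl | hm :
      3 ≤ m ∨ m = 2 ∨ m = 1 ∨ m = 0 ∨ m = -1 ∨ m ≤ -2 := by omega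
  · exact gaussInflow_of_three_le hσ₀ hm
  · exact_mod_cast gaussInflow_two hσ₀
  · exact_mod_cast gaussInflow_one hσ₀
  · simpa using gaussInflow_zero hσ₀
  · exact_mod_cast gaussInflow_neg_one hσ₀
  · exact gaussInflow_of_le_neg_two hσ₀ hm

theorem stmt14 (σ f : ℝ) (hσ : 1 ≤ σ) (hf : f ∈ Set.Icc (-(1:ℝ)/2) (1/2)) :
    ∀ m : ℤ,
      ∑' n : ℤ, Real.exp (-((n : ℝ) + f) ^ 2 / (2 * σ ^ 2)) * ramanujanKernel σ f n m =
        Real.exp (-((m : ℝ) + f) ^ 2 / (2 * σ ^ 2)) :=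
  stmt14_general σ f hσ
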